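/- arXiv:2301.03316 — 2 statements merged into one kernel-verified Lean document; each statement's English description precedes it below -/
import Mathlib

section
/- Let λ = (λ_1,…,λ_n) be a partition of n, set d_i = λ_i + n − i and P = {d_1,…,d_n}. Then for every i with 1 ≤ i ≤ n, the set {j : 1 ≤ j ≤ d_i and d_i − j ∉ P} equals the set of hook lengths of the i-th row of the Young diagram of λ, i.e. equals {h(i,j) : 1 ≤ j ≤ λ_i}. -/
/-- `d_i = λ_i + n − i`, with rows indexed by `i : Fin n` (so `i` stands for row `i+1`). -/
def dSeq (n : ℕ) (lam : Fin n → ℕ) (i : Fin n) : ℕ := lam i + (n - 1 - (i : ℕ))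

/-- `P = {d_1, …, d_n}`. -/
def dSet (n : ℕ) (lam : Fin n → ℕ) : Finset ℕ := Finset.image (dSeq n lam) Finset.univ

/-- `L_j`: the number of cells in column `j` of the Young diagram of `λ`. -/
def colLen (n : ℕ) (lam : Fin n → ℕ) (j : ℕ) : ℕ :=
  (Finset.univ.filter fun k : Fin n => j ≤ lam k).card

/-- The hook length `h(i,j) = λ_i − j + L_j − i + 1` of the cell in row `i+1`
(indexed by `i : Fin n`) and column `j`. -/
def hookLen (n : ℕ) (lam : Fin n → ℕ) (i : Fin n) (j : ℕ) : ℕ :=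
  (lam i - j) + (colLen n lam j - ((i : ℕ) + 1)) + 1

/-! Since `d_i - h(i,j) = (n - L_j) + (j - 1)` and no `d_k` equals `(n - L_j) + (j - 1)` (it lies
above or below according as row `k` reaches column `j` or not), the hook lengths of row `i` lie in
the left-hand set. Both sets have `λ_i` elements: the hook lengths along a row strictly decrease,
and exactly `n - 1 - i` elements of `P` lie below `d_i`. -/

open Finset

theorem Fin.lt_card_filter_iff_of_antitone {n : ℕ} {p : Fin n → Prop} [DecidablePred p]
    (hp : Antitone p) (k : Fin n) : (k : ℕ) < #(univ.filter p) ↔ p k := by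
  constructor
  · intro hk
    by_contra hnp
    have hsub : univ.filter p ⊆ Iio k := fun k' hk' => by
      simp only [mem_filter, mem_univ, true_and] at hk'
      exact mem_Iio.2 (lt_of_not_ge fun hle => hnp (hp hle hk'))
    have := card_le_card hsub
    rw [Fin.card_Iio] at this
    omega
  · intro hpk
    have hsub : Iic k ⊆ univ.filter p := fun k' hk' => by
      simpa using hp (mem_Iic.1 hk') hpk
    have := card_le_card hsub
    rw [Fin.card_Iic] at this
    omega

section

variable {n : ℕ} {lam : Fin n → ℕ}

theorem lt_colLen_iff (hanti : Antitone lam) (j : ℕ) (k : Fin n) :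
    (k : ℕ) < colLen n lam j ↔ j ≤ lam k :=
  Fin.lt_card_filter_iff_of_antitone (fun _ _ hab hj => hj.trans (hanti hab)) k

theorem colLen_le (lam : Fin n → ℕ) (j : ℕ) : colLen n lam j ≤ n :=
  (card_filter_le _ _).trans (card_fin n).le

theorem colLen_antitone (lam : Fin n → ℕ) : Antitone (colLen n lam) :=
  fun _ _ hjj' => card_le_card <| monotone_filter_right _ fun _ _ h => hjj'.trans h

theorem dSeq_strictAnti (hanti : Antitone lam) : StrictAnti (dSeq n lam) := by
  intro a b hab
  have hlam : lam b ≤ lam a := hanti hab.le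
  have hab' : (a : ℕ) < b := hab
  have hb : (b : ℕ) < n := b.isLt
  unfold dSeq
  omega

theorem colLen_add_notMem_dSet (hanti : Antitone lam) {j : ℕ} (hj : 1 ≤ j) :
    (n - colLen n lam j) + (j - 1) ∉ dSet n lam := by
  simp only [dSet, mem_image, mem_univ, true_and, not_exists]
  intro k hk
  have hLn := colLen_le lam j
  have hkL := lt_colLen_iff hanti j k
  have hkn : (k : ℕ) < n := k.isLt
  unfold dSeq at hk
  by_cases hjk : j ≤ lam k <;> simp only [hjk, iff_true, iff_false] at hkL <;> omega

theorem dSeq_sub_hookLen (hanti : Antitone lam) {i : Fin n} {j : ℕ} (hj1 : 1 ≤ j)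
    (hj : j ≤ lam i) :
    dSeq n lam i - hookLen n lam i j = (n - colLen n lam j) + (j - 1) := by
  have hiL := (lt_colLen_iff hanti j i).2 hj
  have hLn := colLen_le lam j
  unfold dSeq hookLen
  omega

theorem image_hookLen_subset (hanti : Antitone lam) (i : Fin n) :
    (Icc 1 (lam i)).image (hookLen n lam i)
      ⊆ (Icc 1 (dSeq n lam i)).filter (fun m => dSeq n lam i - m ∉ dSet n lam) := by
  simp only [subset_iff, mem_image, mem_Icc, mem_filter]
  rintro _ ⟨j, ⟨hj1, hj⟩, rfl⟩
  have hiL := (lt_colLen_iff hanti j i).2 hj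
  have hLn := colLen_le lam j
  refine ⟨⟨?_, ?_⟩, dSeq_sub_hookLen hanti hj1 hj ▸ colLen_add_notMem_dSet hanti hj1⟩ <;>
  · simp only [dSeq, hookLen]
    omega

theorem hookLen_strictAntiOn (i : Fin n) : StrictAntiOn (hookLen n lam i) (Set.Iic (lam i)) := by
  intro j _ j' hj' hjj'
  have hL := colLen_antitone lam hjj'.le
  have hj'i : j' ≤ lam i := hj'
  unfold hookLen
  omega

theorem card_image_hookLen (i : Fin n) : #((Icc 1 (lam i)).image (hookLen n lam i)) = lam i := by
  rw [card_image_of_injOn, Nat.card_Icc, Nat.add_sub_cancel]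
  exact (hookLen_strictAntiOn i).injOn.mono fun j hj => (mem_Icc.1 hj).2

theorem card_filter_dSet_lt (hanti : Antitone lam) (i : Fin n) :
    #((dSet n lam).filter (· < dSeq n lam i)) = n - 1 - i := by
  have hd := dSeq_strictAnti hanti
  rw [dSet, filter_image, card_image_of_injective _ hd.injective, ← Fin.card_Ioi,
    ← filter_lt_eq_Ioi]
  simp only [hd.lt_iff_gt]

end

theorem Finset.card_filter_Icc_sub_notMem (s : Finset ℕ) (D : ℕ) :
    #((Icc 1 D).filter (fun m => D - m ∉ s)) = D - #(s.filter (· < D)) := by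
  have hreflect : #((Icc 1 D).filter (fun m => D - m ∉ s)) = #((range D).filter (· ∉ s)) := by
    refine card_nbij' (D - ·) (D - ·) ?_ ?_ ?_ ?_ <;>
      intro m hm <;> simp only [coe_filter, Set.mem_ofPred_eq, mem_Icc, mem_range] at hm ⊢
    · exact ⟨by omega, hm.2⟩
    · exact ⟨⟨by omega, by omega⟩, by rw [Nat.sub_sub_self hm.1.le]; exact hm.2⟩
    · omega
    · omega
  have hsplit := card_filter_add_card_filter_not (s := range D) (· ∈ s)
  have hfilter : (range D).filter (· ∈ s) = s.filter (· < D) := by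
    ext; simp only [mem_filter, mem_range]; tauto
  rw [card_range, hfilter] at hsplit
  omega

theorem filter_not_mem_dSet_eq_hookLengths_general (n : ℕ) (lam : Fin n → ℕ)
    (hanti : Antitone lam) (i : Fin n) :
    (Finset.Icc 1 (dSeq n lam i)).filter (fun j => dSeq n lam i - j ∉ dSet n lam)
      = (Finset.Icc 1 (lam i)).image (fun j => hookLen n lam i j) := by
  refine (eq_of_subset_of_card_le (image_hookLen_subset hanti i) ?_).symm
  rw [card_filter_Icc_sub_notMem, card_filter_dSet_lt hanti, card_image_hookLen, dSeq]
  omega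

/-- Lemma 2: the set `{j : 1 ≤ j ≤ d_i, d_i − j ∉ P}` equals the set of hook lengths
of the `i`-th row of the Young diagram of `λ`. -/
theorem filter_not_mem_dSet_eq_hookLengths (n : ℕ) (lam : Fin n → ℕ)
    (hanti : Antitone lam) (hsum : ∑ i, lam i = n) (i : Fin n) :
    (Finset.Icc 1 (dSeq n lam i)).filter (fun j => dSeq n lam i - j ∉ dSet n lam)
      = (Finset.Icc 1 (lam i)).image (fun j => hookLen n lam i j) :=
  filter_not_mem_dSet_eq_hookLengths_general n lam hanti i
end

section
/- Let λ be a partition of n with variables f_{i,j} and Wronskian coefficients r_s as in the standard setup. If the linear monomial f_{i,j} occurs with nonzero coefficient in r_s, then s = j. -/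
/-- `f_i = u^{d_i} + Σ_{j : 1 ≤ j ≤ d_i, d_i−j ∉ P} f_{i,j} u^{d_i−j}`, a polynomial in `u`
over the polynomial ring `ℂ[f_{i,j}]` (the variable `f_{i,j}` is `MvPolynomial.X (i,j)`). -/
noncomputable def rowPoly (n : ℕ) (lam : Fin n → ℕ) (i : Fin n) :
    Polynomial (MvPolynomial (Fin n × ℕ) ℂ) :=
  Polynomial.X ^ (dSeq n lam i) +
    ∑ j ∈ (Finset.Icc 1 (dSeq n lam i)).filter (fun j => dSeq n lam i - j ∉ dSet n lam),
      Polynomial.C (MvPolynomial.X (i, j)) * Polynomial.X ^ (dSeq n lam i - j)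

/-- The Wronskian `Wr(f_1,…,f_n)`. -/
noncomputable def wronskianPoly (n : ℕ) (lam : Fin n → ℕ) :
    Polynomial (MvPolynomial (Fin n × ℕ) ℂ) :=
  Matrix.det (Matrix.of fun a b : Fin n => Polynomial.derivative^[(a : ℕ)] (rowPoly n lam b))

/-- `r_s`: the coefficient of `u^{n−s}` in `Wr(f_1,…,f_n)`. -/
noncomputable def rCoeff (n : ℕ) (lam : Fin n → ℕ) (s : ℕ) : MvPolynomial (Fin n × ℕ) ℂ :=
  (wronskianPoly n lam).coeff (n - s)

/-!
Give `u` weight one and `f_{i,j}` weight `j`. Then every `f_i` is homogeneous of weight `d_i`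
and each derivative lowers the weight by one, so `Wr(f_1,…,f_n)` is homogeneous of weight
`∑ d_i - ∑_{a<n} a = |λ| = n`. Hence `r_s`, the coefficient of `u^{n-s}`, is homogeneous of
weight `s`, while the monomial `f_{i,j}` has weight `j`. Homogeneity is expressed through the
substitution `u ↦ t u`, `f_{i,j} ↦ t^j f_{i,j}`: it sends `f_b` to `t^{d_b} f_b`, while the
`a`-th derivative of `p(t u)` is `t^a p^{(a)}(t u)`, so scaling the Wronskian before and after
differentiating gives `t^{∑ a} · (scaled Wr) = t^{∑ d_b} · Wr`.
-/

open Polynomial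

section WeightScale

variable {σ R : Type*} [CommSemiring R] (w : σ → ℕ)

noncomputable def weightScale : MvPolynomial σ R →ₐ[R] (MvPolynomial σ R)[X] :=
  MvPolynomial.aeval fun v => C (MvPolynomial.X v) * X ^ w v

lemma weightScale_X (v : σ) :
    weightScale w (MvPolynomial.X v : MvPolynomial σ R) = C (MvPolynomial.X v) * X ^ w v :=
  MvPolynomial.aeval_X _ _

lemma weightScale_monomial (m : σ →₀ ℕ) (c : R) :
    weightScale w (MvPolynomial.monomial m c) =
      C (MvPolynomial.monomial m c) * X ^ Finsupp.weight w m := by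
  rw [weightScale, MvPolynomial.aeval_monomial, Finsupp.weight_apply]
  simp only [mul_pow, Finsupp.prod, Finset.prod_mul_distrib, ← pow_mul, Finset.prod_pow_eq_pow_sum]
  rw [MvPolynomial.monomial_eq, Finsupp.prod, map_mul, map_prod, Finsupp.sum]
  simp only [map_pow, smul_eq_mul, mul_comm (m _), Polynomial.algebraMap_apply,
    MvPolynomial.algebraMap_eq, mul_assoc]

lemma coeff_weightScale (p : MvPolynomial σ R) (k : ℕ) :
    (weightScale w p).coeff k = MvPolynomial.weightedHomogeneousComponent w k p := by
  induction p using MvPolynomial.induction_on' with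
  | add p q hp hq => simp [hp, hq]
  | monomial m c =>
    classical
    ext d
    rw [weightScale_monomial, coeff_C_mul_X_pow, MvPolynomial.coeff_weightedHomogeneousComponent]
    split_ifs <;> simp_all [MvPolynomial.coeff_monomial] <;> rintro rfl <;> simp_all

lemma isWeightedHomogeneous_of_weightScale_eq {p : MvPolynomial σ R} {k : ℕ}
    (h : weightScale w p = C p * X ^ k) : p.IsWeightedHomogeneous w k := by
  have hp : MvPolynomial.weightedHomogeneousComponent w k p = p := by
    rw [← coeff_weightScale, h, coeff_C_mul_X_pow, if_pos rfl]
  exact hp ▸ MvPolynomial.weightedHomogeneousComponent_isWeightedHomogeneous k p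

/-- The substitution `u ↦ t u`, `X v ↦ t ^ w v • X v` on polynomials in `u`, where `t` is the
inner polynomial variable: `p` is homogeneous of weight `d` (with `u` of weight one) iff it is
sent to `t ^ d * p`. -/
noncomputable def weightScalePoly (p : (MvPolynomial σ R)[X]) : (MvPolynomial σ R)[X][X] :=
  (p.map (weightScale w).toRingHom).comp (C X * X)

end WeightScale

lemma iterate_derivative_comp_C_mul_X {A : Type*} [CommSemiring A] (a : A) (p : A[X]) (k : ℕ) :
    derivative^[k] (p.comp (C a * X)) = C a ^ k * (derivative^[k] p).comp (C a * X) := by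
  induction k generalizing p with
  | zero => simp
  | succ k ih =>
    rw [Function.iterate_succ_apply', ih, ← C_pow, derivative_C_mul, derivative_comp,
      Function.iterate_succ_apply']
    simp only [derivative_mul, derivative_C, derivative_X, zero_mul, zero_add, mul_one, C_pow]
    ring

section Wronskian

variable {A : Type*} [CommRing A] {n : ℕ}

noncomputable def wronskianMatrix (f : Fin n → A[X]) : Matrix (Fin n) (Fin n) A[X] :=
  Matrix.of fun a b => derivative^[a] (f b)

lemma det_wronskianMatrix_map {B : Type*} [CommRing B] (φ : A →+* B) (f : Fin n → A[X]) :
    (wronskianMatrix fun b => (f b).map φ).det = (wronskianMatrix f).det.map φ := by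
  rw [← coe_mapRingHom, RingHom.map_det]
  congr 1
  ext a b
  simp [wronskianMatrix, iterate_derivative_map]

lemma det_wronskianMatrix_C_mul (c : Fin n → A) (f : Fin n → A[X]) :
    (wronskianMatrix fun b => C (c b) * f b).det = C (∏ b, c b) * (wronskianMatrix f).det := by
  rw [map_prod, ← Matrix.det_mul_row]
  congr 1
  ext a b
  simp [wronskianMatrix, iterate_derivative_C_mul]

lemma det_wronskianMatrix_comp_C_mul_X (a : A) (f : Fin n → A[X]) :
    (wronskianMatrix fun b => (f b).comp (C a * X)).det =
      C a ^ (∑ i : Fin n, (i : ℕ)) * (wronskianMatrix f).det.comp (C a * X) := by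
  rw [← Finset.prod_pow_eq_pow_sum, ← coe_compRingHom_apply, RingHom.map_det,
    ← Matrix.det_mul_column]
  congr 1
  ext i b
  simp [wronskianMatrix, iterate_derivative_comp_C_mul_X]

end Wronskian

lemma weightScalePoly_rowPoly (n : ℕ) (lam : Fin n → ℕ) (b : Fin n) :
    weightScalePoly Prod.snd (rowPoly n lam b) =
      C (X ^ dSeq n lam b) * (rowPoly n lam b).map C := by
  simp only [weightScalePoly, rowPoly, Polynomial.map_add, Polynomial.map_pow, Polynomial.map_X,
    Polynomial.map_sum, Polynomial.map_mul, Polynomial.map_C, add_comp, pow_comp, X_comp, sum_comp,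
    mul_comp, C_comp, mul_add, Finset.mul_sum, AlgHom.toRingHom_eq_coe, RingHom.coe_coe,
    weightScale_X]
  refine congrArg₂ (· + ·) (by rw [mul_pow, C_pow]) (Finset.sum_congr rfl fun j hj => ?_)
  have hjd : j ≤ dSeq n lam b := (Finset.mem_Icc.1 (Finset.mem_filter.1 hj).1).2
  rw [mul_pow, ← C_pow, ← pow_sub_mul_pow (X : (MvPolynomial _ ℂ)[X]) hjd]
  simp only [map_mul]
  ring

lemma sum_dSeq (n : ℕ) (lam : Fin n → ℕ) (hsum : ∑ i, lam i = n) :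
    ∑ i, dSeq n lam i = n + ∑ i : Fin n, (i : ℕ) := by
  simp only [dSeq]
  rw [Finset.sum_add_distrib, hsum, Fin.sum_univ_eq_sum_range (fun i => n - 1 - i),
    Fin.sum_univ_eq_sum_range (fun i => i), Finset.sum_range_reflect (fun i => i) n]

lemma weightScalePoly_wronskianPoly (n : ℕ) (lam : Fin n → ℕ) (hsum : ∑ i, lam i = n) :
    weightScalePoly Prod.snd (wronskianPoly n lam) = C (X ^ n) * (wronskianPoly n lam).map C := by
  have key : C (X ^ ∑ i : Fin n, (i : ℕ)) * weightScalePoly Prod.snd (wronskianPoly n lam) =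
      C (X ^ ∑ i, dSeq n lam i) * (wronskianPoly n lam).map C := by
    calc _ = (wronskianMatrix fun b => weightScalePoly Prod.snd (rowPoly n lam b)).det := by
          simp only [weightScalePoly]
          rw [det_wronskianMatrix_comp_C_mul_X, det_wronskianMatrix_map, C_pow]
          rfl
      _ = _ := by
          simp only [weightScalePoly_rowPoly, det_wronskianMatrix_C_mul, det_wronskianMatrix_map,
            Finset.prod_pow_eq_pow_sum]
          rfl
  rw [sum_dSeq n lam hsum, add_comm, pow_add, C_mul, mul_assoc] at key
  exact mul_left_cancel₀ (by simp) key

lemma rCoeff_isWeightedHomogeneous (n : ℕ) (lam : Fin n → ℕ) (hsum : ∑ i, lam i = n) {s : ℕ}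
    (hs : s ≤ n) : (rCoeff n lam s).IsWeightedHomogeneous Prod.snd s := by
  apply isWeightedHomogeneous_of_weightScale_eq
  have h := congrArg (coeff · (n - s)) (weightScalePoly_wronskianPoly n lam hsum)
  simp only [weightScalePoly, comp_C_mul_X_coeff, coeff_C_mul, coeff_map] at h
  refine mul_right_cancel₀ (pow_ne_zero (n - s) X_ne_zero) ?_
  rw [rCoeff, ← RingHom.coe_coe, ← AlgHom.toRingHom_eq_coe, h, ← pow_sub_mul_pow X hs]
  ring

theorem linear_term_occurs_only_in_rCoeff_deg_general (n : ℕ) (lam : Fin n → ℕ)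
    (hsum : ∑ i, lam i = n)
    (i : Fin n) (j : ℕ)
    (s : ℕ) (hs : s ≤ n)
    (hocc : MvPolynomial.coeff (Finsupp.single (i, j) 1) (rCoeff n lam s) ≠ 0) :
    s = j := by
  have h := rCoeff_isWeightedHomogeneous n lam hsum hs hocc
  rwa [Finsupp.weight_single, one_smul, eq_comm] at h

/-- Lemma: if the linear monomial `f_{i,j}` occurs with nonzero coefficient in the
Wronskian coefficient `r_s` (for `0 ≤ s ≤ n`), then `s = j`. -/
theorem linear_term_occurs_only_in_rCoeff_deg (n : ℕ) (lam : Fin n → ℕ)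
    (hanti : Antitone lam) (hsum : ∑ i, lam i = n)
    (i : Fin n) (j : ℕ) (hj1 : 1 ≤ j) (hj2 : j ≤ dSeq n lam i)
    (hjP : dSeq n lam i - j ∉ dSet n lam)
    (s : ℕ) (hs : s ≤ n)
    (hocc : MvPolynomial.coeff (Finsupp.single (i, j) 1) (rCoeff n lam s) ≠ 0) :
    s = j :=
  linear_term_occurs_only_in_rCoeff_deg_general n lam hsum i j s hs hocc
end
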